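/- Liouville theorem for s-harmonic functions: let u : ℝ^N → ℝ be measurable, bounded, and s-harmonic on all of ℝ^N, i.e. u is continuous on ℝ^N and for every x ∈ ℝ^N and every r > 0 one has u(x) = ∫_{ℝ^N∖B_r(x)} η_r(y−x)·u(y) dy. Then u is constant. -/

import Mathlib

open MeasureTheory Filter

/-- The constant `c(N,s) = Γ(N/2)·sin(πs)/π^{1+N/2}`. -/
noncomputable def cK (N : ℕ) (s : ℝ) : ℝ :=
  Real.Gamma ((N : ℝ) / 2) * Real.sin (Real.pi * s) / Real.pi ^ (1 + (N : ℝ) / 2)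

/-- The kernel `η_r(x) = c(N,s)·r^{2s}/(|x|^N·(|x|²−r²)^s)` for `|x| > r`, and `0` for `|x| ≤ r`. -/
noncomputable def eta (N : ℕ) (s r : ℝ) (x : EuclideanSpace ℝ (Fin N)) : ℝ :=
  if r < ‖x‖ then cK N s * r ^ (2 * s) / (‖x‖ ^ N * (‖x‖ ^ 2 - r ^ 2) ^ s) else 0

open Measure Set Metric
open scoped ENNReal Topology

section Polar
variable {E : Type*} [NormedAddCommGroup E] [NormedSpace ℝ E] [MeasurableSpace E] [BorelSpace E]
  [FiniteDimensional ℝ E] [Nontrivial E]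

lemma lintegral_fun_norm_addHaar' (μ : Measure E) [μ.IsAddHaarMeasure] (f : ℝ → ℝ≥0∞)
    (hf : Measurable f) :
    ∫⁻ x, f ‖x‖ ∂μ
      = μ.toSphere univ
        * ∫⁻ t in Ioi (0:ℝ), ENNReal.ofReal (t ^ (Module.finrank ℝ E - 1)) * f t := by
  have h1 : ∫⁻ x, f ‖x‖ ∂μ = ∫⁻ x : ({(0:E)}ᶜ : Set E), f ‖x.1‖ ∂(μ.comap (↑)) := by
    rw [lintegral_subtype_comap (measurableSet_singleton _).compl fun x : E => f ‖x‖,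
      restrict_compl_singleton]
  have hm : Measurable fun p : sphere (0:E) 1 × Ioi (0:ℝ) => f p.2 :=
    hf.comp (measurable_subtype_coe.comp measurable_snd)
  have h2 := (μ.measurePreserving_homeomorphUnitSphereProd).lintegral_comp
    (f := fun p : sphere (0:E) 1 × Ioi (0:ℝ) => f p.2) hm
  have h3 : ∀ x : ({(0:E)}ᶜ : Set E), f ‖x.1‖ = f ((homeomorphUnitSphereProd E x).2 : ℝ) := by
    intro x; simp
  rw [h1]
  calc ∫⁻ x : ({(0:E)}ᶜ : Set E), f ‖x.1‖ ∂(μ.comap (↑))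
      = ∫⁻ x : ({(0:E)}ᶜ : Set E), f ((homeomorphUnitSphereProd E x).2 : ℝ) ∂(μ.comap (↑)) :=
        lintegral_congr h3
    _ = ∫⁻ p : sphere (0:E) 1 × Ioi (0:ℝ), f p.2
          ∂(μ.toSphere.prod (volumeIoiPow (Module.finrank ℝ E - 1))) := h2
    _ = μ.toSphere univ * ∫⁻ t : Ioi (0:ℝ), f t ∂(volumeIoiPow (Module.finrank ℝ E - 1)) := by
        rw [lintegral_prod _ hm.aemeasurable]
        simp [lintegral_const, mul_comm]
    _ = μ.toSphere univ
        * ∫⁻ t in Ioi (0:ℝ), ENNReal.ofReal (t ^ (Module.finrank ℝ E - 1)) * f t := by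
        congr 1
        rw [Measure.volumeIoiPow, lintegral_withDensity_eq_lintegral_mul _
          ((measurable_subtype_coe.pow_const _).ennreal_ofReal)
          (g := fun t : Ioi (0:ℝ) => f t.1) (hf.comp measurable_subtype_coe)]
        rw [← lintegral_subtype_comap measurableSet_Ioi
          (fun t : ℝ => ENNReal.ofReal (t ^ (Module.finrank ℝ E - 1)) * f t)]
        rfl
end Polar

lemma eta_meas (N : ℕ) (s r : ℝ) : Measurable (eta N s r) := by
  unfold eta
  refine Measurable.ite (measurableSet_lt measurable_const measurable_norm) ?_ measurable_const
  fun_prop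

noncomputable def etaRad (N : ℕ) (s : ℝ) (t : ℝ) : ℝ :=
  if 1 < t then cK N s * 1 ^ (2 * s) / (t ^ N * (t ^ 2 - 1 ^ 2) ^ s) else 0

lemma eta_one_eq (N : ℕ) (s : ℝ) (x : EuclideanSpace ℝ (Fin N)) :
    eta N s 1 x = etaRad N s ‖x‖ := rfl

lemma etaRad_meas (N : ℕ) (s : ℝ) : Measurable (etaRad N s) := by
  unfold etaRad
  refine Measurable.ite (measurableSet_lt measurable_const measurable_id) ?_ measurable_const
  fun_prop

noncomputable def Bnd (N : ℕ) (s : ℝ) (t : ℝ) : ℝ :=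
  |cK N s| * ((Set.Ioc (1:ℝ) 2).indicator (fun t => (t - 1) ^ (-s)) t
    + (Set.Ioi (2:ℝ)).indicator (fun t => 2 ^ s * t ^ (-(1 + 2*s))) t)

lemma Bnd_nonneg (N : ℕ) (s : ℝ) (t : ℝ) : 0 ≤ Bnd N s t := by
  refine mul_nonneg (abs_nonneg _) (add_nonneg ?_ ?_)
  · exact Set.indicator_nonneg (fun y hy => Real.rpow_nonneg (by linarith [hy.1]) _) t
  · exact Set.indicator_nonneg (fun y hy => mul_nonneg (Real.rpow_nonneg (by norm_num) _) (Real.rpow_nonneg (le_of_lt (lt_trans two_pos hy)) _)) t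

lemma Bnd_integrable (N : ℕ) {s : ℝ} (hs0 : 0 < s) (hs1 : s < 1) :
    Integrable (Bnd N s) (volume : Measure ℝ) := by
  refine Integrable.const_mul (Integrable.add ?_ ?_) _
  · rw [integrable_indicator_iff measurableSet_Ioc]
    have h0 : IntervalIntegrable (fun x : ℝ => x ^ (-s)) volume 0 1 :=
      intervalIntegral.intervalIntegrable_rpow' (by linarith)
    have h1 := h0.comp_sub_right 1
    rw [intervalIntegrable_iff_integrableOn_Ioc_of_le (by norm_num)] at h1
    simpa [one_add_one_eq_two] using h1
  · rw [integrable_indicator_iff measurableSet_Ioi]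
    exact (integrableOn_Ioi_rpow_of_lt (by linarith) (by norm_num)).const_mul _

lemma etaRad_abs_le (N : ℕ) (hN : 1 ≤ N) {s : ℝ} (hs0 : 0 < s) (hs1 : s < 1) {t : ℝ}
    (ht : 0 < t) : t ^ (N - 1) * |etaRad N s t| ≤ Bnd N s t := by
  by_cases h1 : 1 < t
  · have ht1 : (0:ℝ) < t - 1 := by linarith
    have htsq : (0:ℝ) < t ^ 2 - 1 := by nlinarith
    have hrp : (0:ℝ) < (t ^ 2 - 1) ^ s := Real.rpow_pos_of_pos htsq _
    have hpowpos : (0:ℝ) < t ^ N := pow_pos ht _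
    have habs : |etaRad N s t| = |cK N s| / (t ^ N * (t ^ 2 - 1) ^ s) := by
      rw [etaRad, if_pos h1, Real.one_rpow, mul_one, one_pow, abs_div,
        abs_of_pos (show (0:ℝ) < t ^ N * (t ^ 2 - 1) ^ s by positivity)]
    have hNsplit : t ^ N = t ^ (N - 1) * t := by
      conv_lhs => rw [show N = (N - 1) + 1 by omega]
      rw [pow_succ]
    have hlhs : t ^ (N - 1) * |etaRad N s t| = |cK N s| / (t * (t ^ 2 - 1) ^ s) := by
      rw [habs, hNsplit]
      have h0 : (0:ℝ) < t ^ (N-1) := pow_pos ht _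
      field_simp
    rw [hlhs]
    by_cases h2 : t ≤ 2
    · have hB : Bnd N s t = |cK N s| * (t - 1) ^ (-s) := by
        rw [Bnd, Set.indicator_of_mem (Set.mem_Ioc.mpr ⟨h1, h2⟩), Set.indicator_of_notMem (by simpa using h2)]
        ring
      rw [hB, div_eq_mul_inv, Real.rpow_neg ht1.le]
      refine mul_le_mul_of_nonneg_left (inv_anti₀ (Real.rpow_pos_of_pos ht1 _) ?_)
        (abs_nonneg _)
      calc (t - 1) ^ s ≤ (t ^ 2 - 1) ^ s :=
            Real.rpow_le_rpow ht1.le (by nlinarith) hs0.le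
        _ ≤ t * (t ^ 2 - 1) ^ s := le_mul_of_one_le_left hrp.le (by linarith)
    · push_neg at h2
      have hB : Bnd N s t = |cK N s| * (2 ^ s * t ^ (-(1 + 2*s))) := by
        rw [Bnd, Set.indicator_of_notMem (fun hc => absurd hc.2 (not_le.2 h2)),
          Set.indicator_of_mem (Set.mem_Ioi.2 h2)]
        ring
      rw [hB, div_eq_mul_inv]
      refine mul_le_mul_of_nonneg_left ?_ (abs_nonneg _)
      have hts : (0:ℝ) < t ^ (1 + 2*s) := Real.rpow_pos_of_pos ht _
      have h2s : (0:ℝ) < (2:ℝ) ^ s := Real.rpow_pos_of_pos (by norm_num) _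
      rw [Real.rpow_neg ht.le]
      have hkey : t ^ (1 + 2*s) ≤ 2 ^ s * (t * (t ^ 2 - 1) ^ s) := by
        have e1 : t ^ (1 + 2*s) = t * (t ^ 2 : ℝ) ^ s := by
          rw [Real.rpow_add ht, Real.rpow_one, ← Real.rpow_natCast t 2,
            ← Real.rpow_mul ht.le]
          norm_num
        have e2 : ((t:ℝ) ^ 2) ^ s ≤ 2 ^ s * (t ^ 2 - 1) ^ s := by
          rw [← Real.mul_rpow (by norm_num) (by nlinarith)]
          exact Real.rpow_le_rpow (by positivity) (by nlinarith) hs0.le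
        calc t ^ (1 + 2*s) = t * (t^2:ℝ) ^ s := e1
          _ ≤ t * (2 ^ s * (t ^ 2 - 1) ^ s) := by
              exact mul_le_mul_of_nonneg_left e2 ht.le
          _ = 2 ^ s * (t * (t ^ 2 - 1) ^ s) := by ring
      calc (t * (t ^ 2 - 1) ^ s)⁻¹ ≤ (t ^ (1 + 2*s) / 2 ^ s)⁻¹ := by
            refine inv_anti₀ (by positivity) ?_
            rw [div_le_iff₀ h2s]
            linarith [hkey]
        _ = 2 ^ s * (t ^ (1 + 2*s))⁻¹ := by
            rw [inv_div]
            ring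
  · have h0 : etaRad N s t = 0 := by rw [etaRad, if_neg h1]
    rw [h0, abs_zero, mul_zero]
    exact Bnd_nonneg N s t
lemma Bnd_meas (N : ℕ) (s : ℝ) : Measurable (Bnd N s) := by
  unfold Bnd
  exact (((Measurable.indicator (by fun_prop) measurableSet_Ioc).add
    (Measurable.indicator (by fun_prop) measurableSet_Ioi)).const_mul _)

lemma eta_one_integrable (N : ℕ) (hN : 1 ≤ N) {s : ℝ} (hs0 : 0 < s) (hs1 : s < 1) :
    Integrable (eta N s 1) (volume : Measure (EuclideanSpace ℝ (Fin N))) := by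
  haveI : Nontrivial (EuclideanSpace ℝ (Fin N)) := by
    refine Module.nontrivial_of_finrank_pos (R := ℝ) ?_
    rw [finrank_euclideanSpace_fin]; omega
  refine ⟨(eta_meas N s 1).aestronglyMeasurable, ?_⟩
  have hBint := Bnd_integrable N hs0 hs1
  rw [HasFiniteIntegral]
  have hrw : ∀ x : EuclideanSpace ℝ (Fin N),
      ((‖eta N s 1 x‖₊ : ℝ≥0∞)) = (fun t : ℝ => (‖etaRad N s t‖₊ : ℝ≥0∞)) ‖x‖ := fun x => by
    rw [eta_one_eq]
  calc ∫⁻ x, (‖eta N s 1 x‖₊ : ℝ≥0∞) ∂volume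
      = ∫⁻ x : EuclideanSpace ℝ (Fin N), (fun t : ℝ => (‖etaRad N s t‖₊ : ℝ≥0∞)) ‖x‖ ∂volume :=
        lintegral_congr hrw
    _ = (volume : Measure (EuclideanSpace ℝ (Fin N))).toSphere univ
        * ∫⁻ t in Ioi (0:ℝ), ENNReal.ofReal
            (t ^ (Module.finrank ℝ (EuclideanSpace ℝ (Fin N)) - 1)) * (‖etaRad N s t‖₊ : ℝ≥0∞) :=
        lintegral_fun_norm_addHaar' _ _ ((etaRad_meas N s).nnnorm.coe_nnreal_ennreal)
    _ = (volume : Measure (EuclideanSpace ℝ (Fin N))).toSphere univ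
        * ∫⁻ t in Ioi (0:ℝ), ENNReal.ofReal (t ^ (N - 1)) * (‖etaRad N s t‖₊ : ℝ≥0∞) := by
        rw [finrank_euclideanSpace_fin]
    _ ≤ (volume : Measure (EuclideanSpace ℝ (Fin N))).toSphere univ
        * ∫⁻ t in Ioi (0:ℝ), (‖Bnd N s t‖₊ : ℝ≥0∞) := by
        refine mul_le_mul_right ?_ _
        refine setLIntegral_mono (Bnd_meas N s).nnnorm.coe_nnreal_ennreal ?_
        intro t ht
        simp only [← enorm_eq_nnnorm]
        rw [Real.enorm_eq_ofReal_abs, ← ENNReal.ofReal_mul (pow_nonneg (le_of_lt (Set.mem_Ioi.1 ht)) _)]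
        exact le_trans (ENNReal.ofReal_le_ofReal (etaRad_abs_le N hN hs0 hs1 ht))
          (Real.ofReal_le_enorm _)
    _ < ⊤ := by
        refine ENNReal.mul_lt_top (measure_lt_top _ _) ?_
        calc ∫⁻ t in Ioi (0:ℝ), (‖Bnd N s t‖₊ : ℝ≥0∞)
            ≤ ∫⁻ t, (‖Bnd N s t‖₊ : ℝ≥0∞) ∂volume := setLIntegral_le_lintegral _ _
          _ < ⊤ := hBint.2
lemma eta_smul (N : ℕ) (s : ℝ) {r : ℝ} (hr : 0 < r) (x : EuclideanSpace ℝ (Fin N)) :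
    eta N s r x = (r ^ N)⁻¹ * eta N s 1 (r⁻¹ • x) := by
  have hnorm : ‖r⁻¹ • x‖ = r⁻¹ * ‖x‖ := by
    rw [norm_smul, Real.norm_eq_abs, abs_of_pos (inv_pos.2 hr)]
  unfold eta
  rw [hnorm]
  have hiff : (1 < r⁻¹ * ‖x‖) ↔ r < ‖x‖ := by
    rw [inv_mul_eq_div, lt_div_iff₀ hr, one_mul]
  by_cases h : r < ‖x‖
  · rw [if_pos h, if_pos (hiff.2 h)]
    have hx0 : (0:ℝ) < ‖x‖ := lt_trans hr h
    have hd : (0:ℝ) < ‖x‖ ^ 2 - r ^ 2 := by nlinarith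
    have e2 : (r⁻¹ * ‖x‖) ^ 2 - 1 ^ 2 = (‖x‖ ^ 2 - r ^ 2) / r ^ 2 := by
      field_simp
    have e3 : ((‖x‖ ^ 2 - r ^ 2) / r ^ 2) ^ s = (‖x‖ ^ 2 - r ^ 2) ^ s / (r ^ 2) ^ s :=
      Real.div_rpow hd.le (by positivity : (0:ℝ) ≤ r ^ 2) s
    have e4 : ((r:ℝ) ^ 2) ^ s = r ^ (2 * s) := by
      rw [← Real.rpow_natCast r 2, ← Real.rpow_mul hr.le]
      norm_num
    rw [e2, e3, e4, mul_pow, Real.one_rpow]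
    have h2s : (0:ℝ) < r ^ (2 * s) := Real.rpow_pos_of_pos hr _
    have hrs : (0:ℝ) < (‖x‖ ^ 2 - r ^ 2) ^ s := Real.rpow_pos_of_pos hd _
    have hxN : (0:ℝ) < ‖x‖ ^ N := pow_pos hx0 _
    have hrN : (0:ℝ) < r ^ N := pow_pos hr _
    rw [inv_pow]
    field_simp
  · rw [if_neg h, if_neg (fun hc => h (hiff.1 hc)), mul_zero]

lemma tendsto_G (N : ℕ) (hN : 1 ≤ N) {s : ℝ} (hs0 : 0 < s) (hs1 : s < 1) :
    Filter.Tendsto (fun v : EuclideanSpace ℝ (Fin N) =>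
      ∫ w : EuclideanSpace ℝ (Fin N), |eta N s 1 (w - v) - eta N s 1 w|) (𝓝 0) (𝓝 0) := by
  have hint := eta_one_integrable N hN hs0 hs1
  have hmem : MemLp (eta N s 1) 1 (volume : Measure (EuclideanSpace ℝ (Fin N))) :=
    (memLp_one_iff_integrable).2 hint
  set F : Lp ℝ 1 (volume : Measure (EuclideanSpace ℝ (Fin N))) := hmem.toLp _ with hF
  set T : EuclideanSpace ℝ (Fin N) → C(EuclideanSpace ℝ (Fin N), EuclideanSpace ℝ (Fin N)) :=
    fun v => ⟨fun w => w - v, by fun_prop⟩ with hT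
  have hmp : ∀ v : EuclideanSpace ℝ (Fin N), MeasurePreserving (T v) volume volume :=
    fun v => measurePreserving_sub_right volume v
  have hTcont : Continuous T := by
    refine ContinuousMap.continuous_of_continuous_uncurry _ ?_
    exact continuous_snd.sub continuous_fst
  have hLp : Continuous fun v : EuclideanSpace ℝ (Fin N) =>
      Lp.compMeasurePreserving (T v) (hmp v) F :=
    Continuous.compMeasurePreservingLp continuous_const hTcont hmp (by norm_num)
  have key : ∀ v : EuclideanSpace ℝ (Fin N),
      (∫ w, |eta N s 1 (w - v) - eta N s 1 w|)
        = ‖Lp.compMeasurePreserving (T v) (hmp v) F - F‖ := by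
    intro v
    rw [L1.norm_eq_integral_norm]
    refine (integral_congr_ae ?_).symm
    have h1 : (Lp.compMeasurePreserving (T v) (hmp v) F : EuclideanSpace ℝ (Fin N) → ℝ)
        =ᵐ[volume] fun w => eta N s 1 (w - v) := by
      refine (Lp.coeFn_compMeasurePreserving F (hmp v)).trans ?_
      exact (hmp v).quasiMeasurePreserving.ae_eq hmem.coeFn_toLp
    have h2 := Lp.coeFn_sub (Lp.compMeasurePreserving (T v) (hmp v) F) F
    filter_upwards [h1, h2, hmem.coeFn_toLp] with w hw1 hw2 hw3
    rw [hw2]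
    rw [← hF] at hw3
    simp only [Pi.sub_apply, hw1, hw3, Real.norm_eq_abs]
  have hzero : Lp.compMeasurePreserving (T 0) (hmp 0) F = F := by
    refine Lp.ext ?_
    refine (Lp.coeFn_compMeasurePreserving F (hmp 0)).trans ?_
    have : (T 0 : EuclideanSpace ℝ (Fin N) → EuclideanSpace ℝ (Fin N)) = id := by
      funext w; simp [hT]
    rw [this]
    simp only [Function.comp_id]
    exact Filter.EventuallyEq.refl _ _
  have htends : Filter.Tendsto
      (fun v : EuclideanSpace ℝ (Fin N) => ‖Lp.compMeasurePreserving (T v) (hmp v) F - F‖)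
      (𝓝 0) (𝓝 0) := by
    have h := ((hLp.sub (continuous_const (y := F))).norm).tendsto 0
    simp only [Pi.sub_apply] at h
    rw [hzero] at h
    simpa using h
  simp_rw [key]
  exact htends
/-- A function `u` is `s`-harmonic on an open set `Ω` if it is continuous on `Ω` and
for any `x ∈ Ω` and any `0 < r < dist(x, ∂Ω)` the nonlocal mean value property
`u(x) = ∫_{ℝ^N∖B_r(x)} η_r(y−x)·u(y) dy` holds, the integral being absolutely convergent. -/
def IsSHarmonic (N : ℕ) (s : ℝ) (Ω : Set (EuclideanSpace ℝ (Fin N)))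
    (u : EuclideanSpace ℝ (Fin N) → ℝ) : Prop :=
  ContinuousOn u Ω ∧
    ∀ x ∈ Ω, ∀ r : ℝ, 0 < r → ENNReal.ofReal r < EMetric.infEdist x Ωᶜ →
      IntegrableOn (fun y => eta N s r (y - x) * u y) (Metric.ball x r)ᶜ ∧
      u x = ∫ y in (Metric.ball x r)ᶜ, eta N s r (y - x) * u y

/-- **Liouville theorem for `s`-harmonic functions**: a measurable, bounded function which is
`s`-harmonic on all of `ℝ^N` is constant. -/
theorem liouville_sharmonic (N : ℕ) (hN : 2 ≤ N) (s : ℝ) (hs : s ∈ Set.Ioo (0 : ℝ) 1)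
    (u : EuclideanSpace ℝ (Fin N) → ℝ) (hmeas : Measurable u)
    (hbdd : ∃ M : ℝ, ∀ x, |u x| ≤ M)
    (hharm : IsSHarmonic N s Set.univ u) :
    ∃ c : ℝ, ∀ x, u x = c := by
  obtain ⟨hcont, hmv⟩ := hharm
  obtain ⟨M, hM⟩ := hbdd
  obtain ⟨hs0, hs1⟩ := hs
  have hN1 : 1 ≤ N := by omega
  have hint1 := eta_one_integrable N hN1 hs0 hs1
  have hMnonneg : 0 ≤ M := le_trans (abs_nonneg _) (hM 0)
  -- full space mean value representation
  have hrep : ∀ z : EuclideanSpace ℝ (Fin N), ∀ r : ℝ, 0 < r →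
      Integrable (fun y => eta N s r (y - z) * u y) (volume : Measure (EuclideanSpace ℝ (Fin N)))
      ∧ u z = ∫ y, eta N s r (y - z) * u y := by
    intro z r hr
    have hcond : ENNReal.ofReal r < EMetric.infEdist z (Set.univ : Set (EuclideanSpace ℝ (Fin N)))ᶜ := by
      rw [Set.compl_univ, EMetric.infEdist, EMetric.infEdist_empty]
      exact ENNReal.ofReal_lt_top
    obtain ⟨hint, heq⟩ := hmv z (Set.mem_univ z) r hr hcond
    have hzero : ∀ y ∈ Metric.ball z r, eta N s r (y - z) * u y = 0 := by
      intro y hy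
      rw [Metric.mem_ball, dist_eq_norm] at hy
      have hcond2 : ¬ r < ‖y - z‖ := not_lt.2 hy.le
      rw [eta, if_neg hcond2, zero_mul]
    have hball : IntegrableOn (fun y => eta N s r (y - z) * u y) (Metric.ball z r) volume := by
      refine (integrableOn_zero (ε' := ℝ)).congr_fun (fun y hy => (hzero y hy).symm)
        Metric.isOpen_ball.measurableSet
    have hfull : Integrable (fun y => eta N s r (y - z) * u y) volume := by
      rw [← integrableOn_univ, ← Set.union_compl_self (Metric.ball z r)]
      exact hball.union hint
    refine ⟨hfull, ?_⟩
    rw [heq]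
    exact setIntegral_eq_integral_of_forall_compl_eq_zero
      (fun y hy => hzero y (by simpa using hy))
  -- integrability of translated scaled kernels
  have hker : ∀ z : EuclideanSpace ℝ (Fin N), ∀ r : ℝ, 0 < r →
      Integrable (fun y => eta N s r (y - z)) (volume : Measure (EuclideanSpace ℝ (Fin N))) := by
    intro z r hr
    have h1 : Integrable (fun y : EuclideanSpace ℝ (Fin N) => eta N s 1 (r⁻¹ • y)) volume :=
      (integrable_comp_smul_iff volume (eta N s 1) (inv_ne_zero hr.ne')).2 hint1
    have h2 : Integrable (fun y : EuclideanSpace ℝ (Fin N) => eta N s 1 (r⁻¹ • (y - z))) volume := by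
      have := ((measurePreserving_sub_right
        (volume : Measure (EuclideanSpace ℝ (Fin N))) z).integrable_comp
          h1.aestronglyMeasurable).2 h1
      exact this
    have h3 : (fun y : EuclideanSpace ℝ (Fin N) => eta N s r (y - z))
        = fun y => (r ^ N)⁻¹ * eta N s 1 (r⁻¹ • (y - z)) := by
      funext y; rw [eta_smul N s hr]
    rw [h3]
    exact h2.const_mul _
  refine ⟨u 0, fun x => ?_⟩
  -- key inequality
  have hkey : ∀ r : ℝ, 0 < r → |u x - u 0|
      ≤ (∫ w : EuclideanSpace ℝ (Fin N), |eta N s 1 (w - r⁻¹ • x) - eta N s 1 w|) * M := by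
    intro r hr
    obtain ⟨hix, hex⟩ := hrep x r hr
    obtain ⟨hi0, he0⟩ := hrep 0 r hr
    simp only [sub_zero] at hi0 he0
    have hkx := hker x r hr
    have hk0 : Integrable (fun y => eta N s r y) (volume : Measure (EuclideanSpace ℝ (Fin N))) := by
      have := hker 0 r hr; simpa using this
    have step1 : |u x - u 0| = |∫ y, (eta N s r (y - x) - eta N s r y) * u y| := by
      rw [hex, he0, ← integral_sub hix hi0]
      congr 1
      exact integral_congr_ae (Filter.Eventually.of_forall fun y => by ring)
    have step2 : |∫ y, (eta N s r (y - x) - eta N s r y) * u y|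
        ≤ ∫ y, |eta N s r (y - x) - eta N s r y| * M := by
      have habs : |∫ y, (eta N s r (y - x) - eta N s r y) * u y|
          ≤ ∫ y, |eta N s r (y - x) - eta N s r y| * |u y| := by
        have h := norm_integral_le_integral_norm (fun y => (eta N s r (y - x) - eta N s r y) * u y)
          (μ := (volume : Measure (EuclideanSpace ℝ (Fin N))))
        simpa [Real.norm_eq_abs] using h
      refine le_trans habs ?_
      have hLint : Integrable (fun y => |eta N s r (y - x) - eta N s r y| * |u y|) volume := by
        have h0 : Integrable (fun y => (eta N s r (y - x) - eta N s r y) * u y) volume := by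
          have : (fun y => (eta N s r (y - x) - eta N s r y) * u y)
              = fun y => eta N s r (y - x) * u y - eta N s r y * u y := by
            funext y; ring
          rw [this]
          exact hix.sub hi0
        have := h0.abs
        refine this.congr (Filter.Eventually.of_forall fun y => ?_)
        simp only []
        rw [abs_mul]
      have hRint : Integrable (fun y => |eta N s r (y - x) - eta N s r y| * M) volume :=
        ((hkx.sub hk0).abs).mul_const M
      refine integral_mono hLint hRint (fun y => ?_)
      exact mul_le_mul_of_nonneg_left (hM y) (abs_nonneg _)
    have step3 : ∫ y, |eta N s r (y - x) - eta N s r y| * M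
        = (∫ y, |eta N s r (y - x) - eta N s r y|) * M := integral_mul_const M _
    have step4 : (∫ y, |eta N s r (y - x) - eta N s r y|)
        = ∫ w : EuclideanSpace ℝ (Fin N), |eta N s 1 (w - r⁻¹ • x) - eta N s 1 w| := by
      have hptw : (fun y : EuclideanSpace ℝ (Fin N) => |eta N s r (y - x) - eta N s r y|)
          = fun y => (r ^ N)⁻¹ * |eta N s 1 (r⁻¹ • y - r⁻¹ • x) - eta N s 1 (r⁻¹ • y)| := by
        funext y
        rw [eta_smul N s hr (y - x), eta_smul N s hr y, smul_sub, ← mul_sub, abs_mul,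
          abs_of_nonneg (inv_nonneg.2 (pow_nonneg hr.le _))]
      rw [hptw, integral_const_mul]
      have hcs := MeasureTheory.Measure.integral_comp_smul
        (volume : Measure (EuclideanSpace ℝ (Fin N)))
        (fun w : EuclideanSpace ℝ (Fin N) => |eta N s 1 (w - r⁻¹ • x) - eta N s 1 w|) r⁻¹
      rw [finrank_euclideanSpace_fin] at hcs
      -- hcs : ∫ y, f (r⁻¹ • y) = |((r⁻¹)^N)⁻¹| • ∫ w, f w
      rw [hcs, inv_pow, inv_inv, abs_of_pos (pow_pos hr _), smul_eq_mul, ← mul_assoc,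
        inv_mul_cancel₀ (pow_pos hr N).ne', one_mul]
    rw [step1] at *
    calc |∫ y, (eta N s r (y - x) - eta N s r y) * u y|
        ≤ ∫ y, |eta N s r (y - x) - eta N s r y| * M := step2
      _ = (∫ y, |eta N s r (y - x) - eta N s r y|) * M := step3
      _ = (∫ w : EuclideanSpace ℝ (Fin N), |eta N s 1 (w - r⁻¹ • x) - eta N s 1 w|) * M := by
          rw [step4]
  -- limit as r → ∞ along naturals
  have hG := tendsto_G N hN1 hs0 hs1
  have hseq : Filter.Tendsto (fun n : ℕ => ((n:ℝ))⁻¹ • x) Filter.atTop (𝓝 0) := by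
    have h1 : Filter.Tendsto (fun n : ℕ => ((n:ℝ))⁻¹) Filter.atTop (𝓝 0) :=
      tendsto_inv_atTop_nhds_zero_nat
    have := h1.smul_const x
    rwa [zero_smul] at this
  have h2 : Filter.Tendsto (fun n : ℕ =>
      (∫ w : EuclideanSpace ℝ (Fin N), |eta N s 1 (w - ((n:ℝ))⁻¹ • x) - eta N s 1 w|) * M)
      Filter.atTop (𝓝 0) := by
    have := (hG.comp hseq).mul_const M
    simpa using this
  have h3 : |u x - u 0| ≤ 0 := by
    refine ge_of_tendsto h2 ?_
    filter_upwards [Filter.eventually_gt_atTop 0] with n hn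
    have hpos : (0:ℝ) < (n:ℝ) := by exact_mod_cast hn
    have := hkey (n:ℝ) hpos
    simpa using this
  have : u x - u 0 = 0 := abs_eq_zero.1 (le_antisymm h3 (abs_nonneg _))
  linarith
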